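/- Let H1 be an r1 × n1 matrix over 𝔽₂ such that every row and every column of H1 has Hamming weight at most s, and let R_d be the (d−1) × d repetition check matrix over 𝔽₂ (with d ≥ 2). Form the hypergraph product check matrices H_X = [H1 ⊗ I_d | I_{r1} ⊗ R_dᵀ] and H_Z = [I_{n1} ⊗ R_d | H1ᵀ ⊗ I_{d−1}]. Then every row of H_X and every row of H_Z has Hamming weight at most s + 2, and every column of the stacked matrix [H_X; H_Z] (the qubit use count of every qubit) has Hamming weight at most s + 2. -/

import Mathlib

open Matrix
open scoped Kronecker

/-- The X-type check matrix of the hypergraph product code: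
`H_X = [H1 ⊗ I_{n2} | I_{r1} ⊗ H2ᵀ]`. -/
def hgpX {r1 n1 r2 n2 : ℕ}
    (H1 : Matrix (Fin r1) (Fin n1) (ZMod 2)) (H2 : Matrix (Fin r2) (Fin n2) (ZMod 2)) :
    Matrix (Fin r1 × Fin n2) ((Fin n1 × Fin n2) ⊕ (Fin r1 × Fin r2)) (ZMod 2) :=
  Matrix.fromCols (H1 ⊗ₖ (1 : Matrix (Fin n2) (Fin n2) (ZMod 2)))
    ((1 : Matrix (Fin r1) (Fin r1) (ZMod 2)) ⊗ₖ H2ᵀ)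

/-- The Z-type check matrix of the hypergraph product code:
`H_Z = [I_{n1} ⊗ H2 | H1ᵀ ⊗ I_{r2}]`. -/
def hgpZ {r1 n1 r2 n2 : ℕ}
    (H1 : Matrix (Fin r1) (Fin n1) (ZMod 2)) (H2 : Matrix (Fin r2) (Fin n2) (ZMod 2)) :
    Matrix (Fin n1 × Fin r2) ((Fin n1 × Fin n2) ⊕ (Fin r1 × Fin r2)) (ZMod 2) :=
  Matrix.fromCols ((1 : Matrix (Fin n1) (Fin n1) (ZMod 2)) ⊗ₖ H2)
    (H1ᵀ ⊗ₖ (1 : Matrix (Fin r2) (Fin r2) (ZMod 2)))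


/-- The Hamming weight of a vector over 𝔽₂: its number of nonzero entries. -/
def wt {ι : Type*} [Fintype ι] (v : ι → ZMod 2) : ℕ :=
  (Finset.univ.filter fun i => v i ≠ 0).card

/-- The (d−1) × d check matrix of the [d,1,d] repetition code over 𝔽₂:
its `i`-th row is `e_i + e_{i+1}`. -/
def repMat (d : ℕ) : Matrix (Fin (d - 1)) (Fin d) (ZMod 2) :=
  Matrix.of fun i j => if (j : ℕ) = (i : ℕ) ∨ (j : ℕ) = (i : ℕ) + 1 then 1 else 0

/-! Row and column weights add under horizontal concatenation and multiply under the Kronecker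
product. Identity rows and columns have weight 1 and those of `R_d` have weight at most 2, so a
check or qubit of the hypergraph product picks up the weight of one row or column of `H1` plus
that of one row or column of `R_d`. -/

section Weight

variable {α β : Type*} [Fintype α] [Fintype β]

lemma wt_sum_elim (v : α ⊕ β → ZMod 2) :
    wt v = wt (fun a => v (Sum.inl a)) + wt (fun b => v (Sum.inr b)) := by
  simp [wt, Finset.card_filter, Fintype.sum_sum_type]

-- `ZMod 2` has no zero divisors, so the support of `f p.1 * g p.2` is a product of supports.
lemma wt_prod_mul (f : α → ZMod 2) (g : β → ZMod 2) :
    wt (fun p : α × β => f p.1 * g p.2) = wt f * wt g := by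
  simp only [wt, Finset.card_filter, Fintype.sum_prod_type, mul_ne_zero_iff, Finset.sum_mul_sum]
  refine Finset.sum_congr rfl fun a _ => Finset.sum_congr rfl fun b _ => ?_
  by_cases hf : f a = 0 <;> by_cases hg : g b = 0 <;> simp [hf, hg]

lemma wt_le_two (v : α → ZMod 2) (g : α → ℕ) (hg : Function.Injective g) (a b : ℕ)
    (h : ∀ i, v i ≠ 0 → g i = a ∨ g i = b) : wt v ≤ 2 :=
  calc wt v ≤ ({a, b} : Finset ℕ).card :=
        Finset.card_le_card_of_injOn g
          (fun i hi => by simpa using h i (Finset.mem_filter.mp hi).2)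
          (fun i _ j _ hij => hg hij)
    _ ≤ 2 := Finset.card_le_two

end Weight

section MatrixWeight

variable {l m n p : Type*}

lemma wt_fromCols_row [Fintype n] [Fintype p] (A : Matrix m n (ZMod 2))
    (B : Matrix m p (ZMod 2)) (i : m) :
    wt (fromCols A B i) = wt (A i) + wt (B i) :=
  wt_sum_elim _

lemma wt_kronecker_row [Fintype m] [Fintype p] (A : Matrix l m (ZMod 2))
    (B : Matrix n p (ZMod 2)) (i : l) (k : n) :
    wt ((A ⊗ₖ B) (i, k)) = wt (A i) * wt (B k) :=
  wt_prod_mul (A i) (B k)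

lemma wt_kronecker_col [Fintype l] [Fintype n] (A : Matrix l m (ZMod 2))
    (B : Matrix n p (ZMod 2)) (j : m) (k : p) :
    wt ((A ⊗ₖ B)ᵀ (j, k)) = wt (Aᵀ j) * wt (Bᵀ k) := by
  rw [← kroneckerMap_transpose, wt_kronecker_row]

lemma wt_one_row [Fintype m] [DecidableEq m] (i : m) : wt ((1 : Matrix m m (ZMod 2)) i) = 1 := by
  have hsupp : Finset.univ.filter (fun j => (1 : Matrix m m (ZMod 2)) i j ≠ 0) = {i} := by
    ext j
    rcases eq_or_ne i j with rfl | hij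
    · simp
    · simp [one_apply_ne hij, hij.symm]
  simp [wt, hsupp]

lemma wt_one_col [Fintype m] [DecidableEq m] (j : m) :
    wt ((1 : Matrix m m (ZMod 2))ᵀ j) = 1 := by
  rw [transpose_one, wt_one_row]

end MatrixWeight

section HypergraphProduct

variable {r1 n1 r2 n2 : ℕ} (H1 : Matrix (Fin r1) (Fin n1) (ZMod 2))
  (H2 : Matrix (Fin r2) (Fin n2) (ZMod 2))

lemma wt_hgpX_row (i : Fin r1) (c : Fin n2) :
    wt (hgpX H1 H2 (i, c)) = wt (H1 i) + wt (H2ᵀ c) := by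
  rw [hgpX, wt_fromCols_row, wt_kronecker_row, wt_kronecker_row, wt_one_row, wt_one_row,
    mul_one, one_mul]

lemma wt_hgpZ_row (j : Fin n1) (k : Fin r2) :
    wt (hgpZ H1 H2 (j, k)) = wt (H1ᵀ j) + wt (H2 k) := by
  rw [hgpZ, wt_fromCols_row, wt_kronecker_row, wt_kronecker_row, wt_one_row, wt_one_row,
    mul_one, one_mul, add_comm]

lemma wt_hgp_col_inl (j : Fin n1) (c : Fin n2) :
    wt ((hgpX H1 H2)ᵀ (Sum.inl (j, c))) + wt ((hgpZ H1 H2)ᵀ (Sum.inl (j, c))) =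
      wt (H1ᵀ j) + wt (H2ᵀ c) := by
  change wt ((H1 ⊗ₖ 1)ᵀ (j, c)) + wt ((1 ⊗ₖ H2)ᵀ (j, c)) = _
  rw [wt_kronecker_col, wt_kronecker_col, wt_one_col, wt_one_col, mul_one, one_mul]

lemma wt_hgp_col_inr (i : Fin r1) (k : Fin r2) :
    wt ((hgpX H1 H2)ᵀ (Sum.inr (i, k))) + wt ((hgpZ H1 H2)ᵀ (Sum.inr (i, k))) =
      wt (H1 i) + wt (H2 k) := by
  change wt ((1 ⊗ₖ H2ᵀ)ᵀ (i, k)) + wt ((H1ᵀ ⊗ₖ 1)ᵀ (i, k)) = _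
  rw [wt_kronecker_col, wt_kronecker_col, wt_one_col, wt_one_col, transpose_transpose,
    transpose_transpose, mul_one, one_mul, add_comm]

end HypergraphProduct

lemma wt_repMat_row {d : ℕ} (i : Fin (d - 1)) : wt (repMat d i) ≤ 2 := by
  refine wt_le_two _ Fin.val Fin.val_injective i (i + 1) fun j hj => ?_
  by_contra! hji
  simp [repMat, hji.1, hji.2] at hj

lemma wt_repMat_col {d : ℕ} (c : Fin d) : wt ((repMat d)ᵀ c) ≤ 2 := by
  refine wt_le_two _ Fin.val Fin.val_injective c (c - 1) fun i hi => ?_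
  have hci : (c : ℕ) = i ∨ (c : ℕ) = i + 1 := by
    by_contra! hci
    simp [repMat, hci.1, hci.2] at hi
  omega

theorem hgp_with_repetition_weights_general {r1 n1 s d : ℕ}
    (H1 : Matrix (Fin r1) (Fin n1) (ZMod 2))
    (hrow : ∀ i : Fin r1, wt (H1 i) ≤ s)
    (hcol : ∀ j : Fin n1, wt (fun i => H1 i j) ≤ s) :
    (∀ ic : Fin r1 × Fin d, wt (hgpX H1 (repMat d) ic) ≤ s + 2) ∧
    (∀ ji : Fin n1 × Fin (d - 1), wt (hgpZ H1 (repMat d) ji) ≤ s + 2) ∧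
    (∀ x : (Fin n1 × Fin d) ⊕ (Fin r1 × Fin (d - 1)),
      wt (fun ic : Fin r1 × Fin d => hgpX H1 (repMat d) ic x) +
        wt (fun ji : Fin n1 × Fin (d - 1) => hgpZ H1 (repMat d) ji x) ≤ s + 2) := by
  refine ⟨fun ⟨i, c⟩ => ?_, fun ⟨j, k⟩ => ?_, ?_⟩
  · rw [wt_hgpX_row]
    exact add_le_add (hrow i) (wt_repMat_col c)
  · rw [wt_hgpZ_row]
    exact add_le_add (hcol j) (wt_repMat_row k)
  · rintro (⟨j, c⟩ | ⟨i, k⟩)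
    · exact (wt_hgp_col_inl H1 (repMat d) j c).trans_le
        (add_le_add (hcol j) (wt_repMat_col c))
    · exact (wt_hgp_col_inr H1 (repMat d) i k).trans_le
        (add_le_add (hrow i) (wt_repMat_row k))

/-- If every row and column of `H1` has Hamming weight at most `s`, then in the hypergraph
product of `H1` with the repetition code `R_d` (`d ≥ 2`), every row of `H_X` and of `H_Z`
has Hamming weight at most `s + 2`, and every column of the stacked matrix `[H_X; H_Z]`
(the qubit use count of every qubit) has Hamming weight at most `s + 2`. -/
theorem hgp_with_repetition_weights {r1 n1 s d : ℕ} (hd : 2 ≤ d)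
    (H1 : Matrix (Fin r1) (Fin n1) (ZMod 2))
    (hrow : ∀ i : Fin r1, wt (H1 i) ≤ s)
    (hcol : ∀ j : Fin n1, wt (fun i => H1 i j) ≤ s) :
    (∀ ic : Fin r1 × Fin d, wt (hgpX H1 (repMat d) ic) ≤ s + 2) ∧
    (∀ ji : Fin n1 × Fin (d - 1), wt (hgpZ H1 (repMat d) ji) ≤ s + 2) ∧
    (∀ x : (Fin n1 × Fin d) ⊕ (Fin r1 × Fin (d - 1)),
      wt (fun ic : Fin r1 × Fin d => hgpX H1 (repMat d) ic x) +
        wt (fun ji : Fin n1 × Fin (d - 1) => hgpZ H1 (repMat d) ji x) ≤ s + 2) :=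
  hgp_with_repetition_weights_general H1 hrow hcol
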